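/- Let a, b be nonzero integers and n ≥ 1 with a + b ≠ 0, (n+1)*a + b ≠ 0, and a + (n+1)*b ≠ 0. Then the equation a*x^n + b*y^n = z^{n+1} is not partition regular on the positive integers, except possibly for constant solutions. -/

import Mathlib

/-!
Let `B = 2 (|a| + |b|) n`. Numbers below `B ^ 10` get a colour of their own, so a monochromatic
solution involving one of them is constant. A larger `t` is coloured by the parity of `⌊log_B t⌋`,
its two leading base-`B` digits, and `⌊2 H t⌋ mod 4`, where `H t = log_{(n+1)/n} (log t)`.

If large `x ≥ y` share a colour, then either `x > B y`, and `z ^ (n+1) = a x ^ n + b y ^ n` is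
dominated by `a x ^ n`, or `x - y ≤ y / B`, and it is dominated by `(a + b) x ^ n`. In both cases
`z ^ (n+1)` and `x ^ n` agree up to a factor `B`, so `log z ≈ n / (n+1) · log x`, i.e.
`H z ≈ H x - 1` with an error below `1/2`. The residue of `⌊2 H⌋` modulo `4` rules this out.
-/

open Real

lemma two_mul_bounds_of_eq_mul_add {c e P Z : ℤ} (hc : c ≠ 0) (he : 2 * |e| ≤ P) (hZ : 0 < Z)
    (h : Z = c * P + e) : P ≤ 2 * Z ∧ Z ≤ 2 * |c| * P := by
  have hP : 0 ≤ P := by linarith [abs_nonneg e]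
  have hc1 : 1 ≤ c := by
    by_contra! hc'
    nlinarith [mul_le_mul_of_nonneg_right (show c ≤ -1 by omega) hP, le_abs_self e]
  rw [abs_of_pos (by omega)]
  constructor <;> nlinarith [neg_abs_le e, le_abs_self e]

section
variable {R : Type*} [CommRing R] [LinearOrder R] [IsStrictOrderedRing R]

lemma two_mul_abs_mul_pow_le {b x y B : R} {n : ℕ} (hn : n ≠ 0) (hy : 0 ≤ y) (hB : 1 ≤ B)
    (hbB : 2 * |b| ≤ B) (h : B * y ≤ x) : 2 * |b * y ^ n| ≤ x ^ n :=
  calc 2 * |b * y ^ n| = 2 * |b| * y ^ n := by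
        rw [abs_mul, abs_of_nonneg (pow_nonneg hy n), mul_assoc]
    _ ≤ B ^ n * y ^ n := by gcongr; exact hbB.trans (le_self_pow₀ hB hn)
    _ = (B * y) ^ n := (mul_pow B y n).symm
    _ ≤ x ^ n := pow_le_pow_left₀ (by positivity) h n

lemma two_mul_abs_mul_pow_sub_pow_le {b x y : R} {n : ℕ} (hn : n ≠ 0) (hy : 0 ≤ y) (hyx : y ≤ x)
    (h : 2 * |b| * n * (x - y) ≤ x) : 2 * |b * (x ^ n - y ^ n)| ≤ x ^ n := by
  have hx : 0 ≤ x := hy.trans hyx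
  have hmv : |x ^ n - y ^ n| ≤ (x - y) * n * x ^ (n - 1) := by
    simpa [abs_of_nonneg hx, abs_of_nonneg hy, hyx, abs_of_nonneg (sub_nonneg.mpr hyx)]
      using abs_pow_sub_pow_le x y n
  calc 2 * |b * (x ^ n - y ^ n)| ≤ 2 * |b| * ((x - y) * n * x ^ (n - 1)) := by
        rw [abs_mul, ← mul_assoc]; gcongr
    _ = (2 * |b| * n * (x - y)) * x ^ (n - 1) := by ring
    _ ≤ x * x ^ (n - 1) := by gcongr
    _ = x ^ n := by rw [← pow_succ', Nat.sub_add_cancel (Nat.one_le_iff_ne_zero.mpr hn)]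
end

def leadingDigits (B t : ℕ) : ℕ := t / B ^ (Nat.log B t - 1)

lemma leadingDigits_lt {B t : ℕ} (hB : 1 < B) (ht : B ≤ t) : leadingDigits B t < B ^ 2 := by
  have hlog : 1 ≤ Nat.log B t := Nat.log_pos hB ht
  rw [leadingDigits, Nat.div_lt_iff_lt_mul (by positivity), ← pow_add,
    show 2 + (Nat.log B t - 1) = Nat.log B t + 1 by omega]
  exact Nat.lt_pow_succ_log_self hB t

lemma mul_sub_le_of_leadingDigits_eq {B x y : ℕ} (hB : 1 < B) (hy : B ≤ y)
    (hlog : Nat.log B x = Nat.log B y) (h : leadingDigits B x = leadingDigits B y) :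
    B * (x - y) ≤ y := by
  set K := B ^ (Nat.log B y - 1)
  have hK : 0 < K := by positivity
  have hBK : B * K ≤ y := by
    rw [← pow_succ', Nat.sub_add_cancel (Nat.log_pos hB hy)]
    exact Nat.pow_log_le_self B (by omega)
  have hdig : x / K = y / K := by rw [leadingDigits, leadingDigits, hlog] at h; exact h
  have hxy : x - y < K := by
    have hx := Nat.div_add_mod x K
    have hy := Nat.div_add_mod y K
    have := Nat.mod_lt x hK
    rw [hdig] at hx
    omega
  nlinarith

lemma pow_mul_lt_of_log_add_lt {B x y k : ℕ} (hB : 1 < B) (h : Nat.log B y + k < Nat.log B x) :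
    B ^ k * y < x :=
  calc B ^ k * y < B ^ k * B ^ (Nat.log B y + 1) :=
        Nat.mul_lt_mul_of_pos_left (Nat.lt_pow_succ_log_self hB y) (by positivity)
    _ = B ^ (Nat.log B y + k + 1) := by ring
    _ ≤ B ^ Nat.log B x := Nat.pow_le_pow_right (by omega) h
    _ ≤ x := Nat.pow_log_le_self B (fun hx => by simp [hx] at h)

lemma pow_le_and_le_of_le {a b : ℤ} (ha : a ≠ 0) (hab : a + b ≠ 0) {n B x y z : ℕ} (hn : 1 ≤ n)
    (hB : 2 * (|a| + |b|) * n ≤ (B : ℤ)) (hB₁ : 1 < B) (hy : B ≤ y) (hyx : y ≤ x) (hz : 0 < z)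
    (hlog : Nat.log B x % 2 = Nat.log B y % 2) (hdig : leadingDigits B x = leadingDigits B y)
    (heq : a * (x : ℤ) ^ n + b * (y : ℤ) ^ n = (z : ℤ) ^ (n + 1)) :
    x ^ n ≤ B * z ^ (n + 1) ∧ z ^ (n + 1) ≤ B * x ^ n := by
  have hn₀ : n ≠ 0 := by omega
  have hnR : (1 : ℤ) ≤ n := by exact_mod_cast hn
  have ha_le : 2 * |a| ≤ B := by nlinarith [abs_nonneg a, abs_nonneg b]
  have hb_le : 2 * |b| * n ≤ B := by nlinarith [abs_nonneg a, abs_nonneg b]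
  have hab_le : 2 * |a + b| ≤ B := by nlinarith [abs_add_le a b, abs_nonneg a, abs_nonneg b]
  obtain ⟨c, hc, hcB, e, he, hZ⟩ : ∃ c : ℤ, c ≠ 0 ∧ 2 * |c| ≤ B ∧
      ∃ e : ℤ, 2 * |e| ≤ (x : ℤ) ^ n ∧ (z : ℤ) ^ (n + 1) = c * x ^ n + e := by
    have := Nat.log_mono_right (b := B) hyx
    -- logarithms of the same parity are equal or at least `2` apart
    rcases (by omega : Nat.log B y + 1 < Nat.log B x ∨ Nat.log B x = Nat.log B y)
      with hfar | hnear
    · have hBy : B * y < x := by simpa using pow_mul_lt_of_log_add_lt hB₁ hfar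
      refine ⟨a, ha, ha_le, b * y ^ n, two_mul_abs_mul_pow_le (B := (B : ℤ)) hn₀ (by positivity)
        (by exact_mod_cast hB₁.le) (by nlinarith [abs_nonneg b]) (by exact_mod_cast hBy.le),
        heq.symm⟩
    · have hBxy := mul_sub_le_of_leadingDigits_eq hB₁ hy hnear hdig
      have hBxy' : (B : ℤ) * (x - y) ≤ y := by
        have : ((B * (x - y) : ℕ) : ℤ) ≤ y := by exact_mod_cast hBxy
        rwa [Nat.cast_mul, Nat.cast_sub hyx] at this
      refine ⟨a + b, hab, hab_le, -(b * ((x : ℤ) ^ n - (y : ℤ) ^ n)), ?_,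
        by linear_combination -heq⟩
      rw [abs_neg]
      exact two_mul_abs_mul_pow_sub_pow_le hn₀ (by positivity) (by exact_mod_cast hyx)
        (by nlinarith [(by exact_mod_cast hyx : (y : ℤ) ≤ x)])
  obtain ⟨h₁, h₂⟩ := two_mul_bounds_of_eq_mul_add hc he (by positivity) hZ
  have hB₂ : (2 : ℤ) ≤ B := by exact_mod_cast hB₁
  constructor
  · exact_mod_cast (by nlinarith [pow_nonneg (Int.natCast_nonneg z) (n + 1)] :
      (x : ℤ) ^ n ≤ B * z ^ (n + 1))
  · exact_mod_cast (by nlinarith [pow_nonneg (Int.natCast_nonneg x) n] :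
      (z : ℤ) ^ (n + 1) ≤ B * x ^ n)

lemma exists_pow_le_and_le {a b : ℤ} (ha : a ≠ 0) (hb : b ≠ 0) (hab : a + b ≠ 0)
    {n B x y z : ℕ} (hn : 1 ≤ n) (hB : 2 * (|a| + |b|) * n ≤ (B : ℤ)) (hB₁ : 1 < B)
    (hx : B ≤ x) (hy : B ≤ y) (hz : 0 < z) (hlog : Nat.log B x % 2 = Nat.log B y % 2)
    (hdig : leadingDigits B x = leadingDigits B y)
    (heq : a * (x : ℤ) ^ n + b * (y : ℤ) ^ n = (z : ℤ) ^ (n + 1)) :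
    ∃ w, (w = x ∨ w = y) ∧ w ^ n ≤ B * z ^ (n + 1) ∧ z ^ (n + 1) ≤ B * w ^ n := by
  rcases le_total y x with hyx | hxy
  · exact ⟨x, .inl rfl, pow_le_and_le_of_le ha hab hn hB hB₁ hy hyx hz hlog hdig heq⟩
  · exact ⟨y, .inr rfl, pow_le_and_le_of_le hb (by rwa [add_comm]) hn (by rwa [add_comm]) hB₁
      hx hxy hz hlog.symm hdig.symm (by linarith)⟩

lemma abs_log_one_add_le {u : ℝ} (hu : |u| ≤ 1 / 2) : |log (1 + u)| ≤ 2 * |u| := by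
  have h := abs_log_sub_add_sum_range_le (x := -u) (by rw [abs_neg]; linarith) 0
  rw [Finset.sum_range_zero, zero_add, abs_neg, sub_neg_eq_add, pow_one] at h
  calc |log (1 + u)| ≤ |u| / (1 - |u|) := h
    _ ≤ 2 * |u| := by rw [div_le_iff₀ (by linarith)]; nlinarith [abs_nonneg u]

lemma abs_logb_sub_add_one_lt {ν p q : ℝ} (hν : 1 ≤ ν) (hp : 0 < p)
    (h : |(ν + 1) * q - ν * p| ≤ p / 10) :
    |logb ((ν + 1) / ν) q - logb ((ν + 1) / ν) p + 1| < 1 / 2 := by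
  have hν0 : 0 < ν := by linarith
  have hq : 0 < q := by nlinarith [neg_abs_le ((ν + 1) * q - ν * p)]
  have hlog_base : 1 / (ν + 1) ≤ log ((ν + 1) / ν) := by
    convert one_sub_inv_le_log_of_pos (x := (ν + 1) / ν) (by positivity) using 1
    field_simp; ring
  have hlog_base_pos : 0 < log ((ν + 1) / ν) := (by positivity : (0 : ℝ) < 1 / (ν + 1)).trans_le hlog_base
  set u := ((ν + 1) * q - ν * p) / (ν * p) with hu_def
  have hu : |u| ≤ 1 / (10 * ν) := by
    rw [abs_div, abs_of_pos (by positivity : 0 < ν * p), div_le_iff₀ (by positivity)]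
    calc _ ≤ p / 10 := h
      _ = _ := by field_simp
  have hlog : log (1 + u) = log q - log p + log ((ν + 1) / ν) := by
    rw [show 1 + u = q * ((ν + 1) / ν) / p by rw [hu_def]; field_simp; ring,
      log_div (by positivity) hp.ne', log_mul hq.ne' (by positivity)]
    ring
  have hlog_le : |log (1 + u)| ≤ 1 / (5 * ν) := by
    have : 1 / (10 * ν) ≤ 1 / 2 := by rw [div_le_div_iff₀] <;> linarith
    calc _ ≤ 2 * |u| := abs_log_one_add_le (hu.trans this)
      _ ≤ 2 * (1 / (10 * ν)) := by gcongr
      _ = 1 / (5 * ν) := by ring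
  rw [logb, logb, ← sub_div, div_add_one hlog_base_pos.ne', ← hlog, abs_div, abs_of_pos hlog_base_pos,
    div_lt_iff₀ hlog_base_pos]
  calc |log (1 + u)| ≤ 1 / (5 * ν) := hlog_le
    _ < 1 / 2 * (1 / (ν + 1)) := by
      rw [one_div_mul_one_div, one_div_lt_one_div] <;> nlinarith
    _ ≤ 1 / 2 * log ((ν + 1) / ν) := by gcongr

lemma abs_log_sub_log_le {K p q : ℝ} (hp : 0 < p) (hq : 0 < q) (h₁ : p ≤ K * q)
    (h₂ : q ≤ K * p) : |log q - log p| ≤ log K := by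
  have hK : 0 < K := pos_of_mul_pos_left (hp.trans_le h₁) hq.le
  have h₁' := log_le_log hp h₁
  have h₂' := log_le_log hq h₂
  rw [log_mul hK.ne' hq.ne'] at h₁'
  rw [log_mul hK.ne' hp.ne'] at h₂'
  exact abs_le.mpr ⟨by linarith, by linarith⟩

noncomputable def loglogScale (n t : ℕ) : ℝ := logb ((n + 1) / n) (log t)

lemma abs_loglogScale_sub_add_one_lt {n B w z : ℕ} (hn : 1 ≤ n) (hB : 1 < B) (hw : B ^ 10 ≤ w)
    (hz : 0 < z) (h₁ : w ^ n ≤ B * z ^ (n + 1)) (h₂ : z ^ (n + 1) ≤ B * w ^ n) :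
    |loglogScale n z - loglogScale n w + 1| < 1 / 2 := by
  have hB' : (1 : ℝ) < B := by exact_mod_cast hB
  have hw' : (B : ℝ) ^ 10 ≤ w := by exact_mod_cast hw
  have hB10 : (0 : ℝ) < B ^ 10 := pow_pos (by linarith) 10
  have hlogw : 10 * log B ≤ log w := by
    rw [← Nat.cast_ofNat, ← log_pow]; exact log_le_log hB10 hw'
  have hcmp := abs_log_sub_log_le (K := B) (p := (w : ℝ) ^ n) (q := (z : ℝ) ^ (n + 1))
    (pow_pos (hB10.trans_le hw') n) (by positivity) (by exact_mod_cast h₁) (by exact_mod_cast h₂)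
  rw [log_pow, log_pow] at hcmp
  push_cast at hcmp
  exact abs_logb_sub_add_one_lt (by exact_mod_cast hn) (by linarith [log_pos hB'])
    (by linarith)

lemma one_le_abs_sub_add_two_of_four_dvd {s t : ℝ} (h : 4 ∣ ⌊t⌋ - ⌊s⌋) :
    1 ≤ |t - s + 2| := by
  obtain ⟨k, hk⟩ := h
  have hkR : (⌊t⌋ : ℝ) - ⌊s⌋ = 4 * k := by exact_mod_cast hk
  have := Int.floor_le s
  have := Int.floor_le t
  have := Int.lt_floor_add_one s
  have := Int.lt_floor_add_one t
  rcases le_or_gt 0 k with hk0 | hk0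
  · have : (0 : ℝ) ≤ k := by exact_mod_cast hk0
    exact le_abs.mpr (.inl (by linarith))
  · have : (k : ℝ) ≤ -1 := by exact_mod_cast (by omega : k ≤ -1)
    exact le_abs.mpr (.inr (by linarith))

noncomputable def largeColor (n B t : ℕ) : ZMod 2 × ZMod (B ^ 2) × ZMod 4 :=
  (Nat.log B t, leadingDigits B t, ⌊2 * loglogScale n t⌋)

noncomputable def color (n B t : ℕ) : Fin (B ^ 10) ⊕ (ZMod 2 × ZMod (B ^ 2) × ZMod 4) :=
  if h : t < B ^ 10 then .inl ⟨t, h⟩ else .inr (largeColor n B t)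

lemma eq_of_color_eq_of_lt {n B s t : ℕ} (h : color n B s = color n B t) (hs : s < B ^ 10) :
    s = t := by
  by_cases ht : t < B ^ 10 <;> simp_all [color]

lemma le_of_color_eq {n B s t : ℕ} (h : color n B s = color n B t) (hs : B ^ 10 ≤ s) :
    B ^ 10 ≤ t := by
  by_contra! ht
  have := eq_of_color_eq_of_lt h.symm ht
  omega

lemma largeColor_eq_of_color_eq {n B s t : ℕ} (h : color n B s = color n B t)
    (hs : B ^ 10 ≤ s) (ht : B ^ 10 ≤ t) : largeColor n B s = largeColor n B t := by
  simpa [color, hs.not_gt, ht.not_gt] using h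

lemma false_of_largeColor_eq {a b : ℤ} (ha : a ≠ 0) (hb : b ≠ 0) (hab : a + b ≠ 0)
    {n B x y z : ℕ} (hn : 1 ≤ n) (hB : 2 * (|a| + |b|) * n ≤ (B : ℤ)) (hB₁ : 1 < B)
    (hx : B ^ 10 ≤ x) (hy : B ^ 10 ≤ y) (hz : 0 < z)
    (hxy : largeColor n B x = largeColor n B y) (hyz : largeColor n B y = largeColor n B z)
    (heq : a * (x : ℤ) ^ n + b * (y : ℤ) ^ n = (z : ℤ) ^ (n + 1)) : False := by
  have hBx : B ≤ x := (Nat.le_self_pow (by norm_num) B).trans hx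
  have hBy : B ≤ y := (Nat.le_self_pow (by norm_num) B).trans hy
  simp only [largeColor, Prod.mk.injEq] at hxy hyz
  obtain ⟨hlog, hdig, hscale⟩ := hxy
  have hdig' : leadingDigits B x = leadingDigits B y := by
    have := (ZMod.natCast_eq_natCast_iff' _ _ _).mp hdig
    rwa [Nat.mod_eq_of_lt (leadingDigits_lt hB₁ hBx),
      Nat.mod_eq_of_lt (leadingDigits_lt hB₁ hBy)] at this
  obtain ⟨w, hw, h₁, h₂⟩ := exists_pow_le_and_le ha hb hab hn hB hB₁ hBx hBy hz
    ((ZMod.natCast_eq_natCast_iff' _ _ _).mp hlog) hdig' heq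
  have hfloor : (4 : ℤ) ∣ ⌊2 * loglogScale n z⌋ - ⌊2 * loglogScale n w⌋ := by
    rw [← Nat.cast_ofNat, ← ZMod.intCast_eq_intCast_iff_dvd_sub]
    rcases hw with rfl | rfl
    exacts [hscale.trans hyz.2.2, hyz.2.2]
  have hsep := one_le_abs_sub_add_two_of_four_dvd hfloor
  have hgap := abs_loglogScale_sub_add_one_lt hn hB₁ (by rcases hw with rfl | rfl <;> assumption)
    hz h₁ h₂
  rw [show 2 * loglogScale n z - 2 * loglogScale n w + 2
      = 2 * (loglogScale n z - loglogScale n w + 1) by ring, abs_mul, abs_two] at hsep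
  linarith

theorem axn_byn_eq_z_pow_succ_not_PR_general (a b : ℤ) (ha : a ≠ 0) (hb : b ≠ 0)
    (n : ℕ) (hn : 1 ≤ n) (hab : a + b ≠ 0) :
    ∃ (r : ℕ) (χ : ℕ → Fin r),
      ∀ x y z : ℕ, 0 < x → 0 < y → 0 < z →
        χ x = χ y → χ y = χ z →
          a * (x : ℤ) ^ n + b * (y : ℤ) ^ n = (z : ℤ) ^ (n + 1) →
            x = y ∧ y = z := by
  set B := 2 * (a.natAbs + b.natAbs) * n
  have hB : 2 * (|a| + |b|) * n ≤ (B : ℤ) := by simp [B]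
  have hB₁ : 1 < B := by
    have := Int.natAbs_pos.mpr ha
    simp only [B]
    nlinarith [Nat.mul_le_mul (show 2 ≤ 2 * (a.natAbs + b.natAbs) by omega) hn]
  have : NeZero (B ^ 2) := ⟨by positivity⟩
  refine ⟨_, Fintype.equivFin _ ∘ color n B, fun x y z _ _ hz hxy hyz heq => ?_⟩
  simp only [Function.comp_apply, EmbeddingLike.apply_eq_iff_eq] at hxy hyz
  by_cases hx : x < B ^ 10
  · obtain rfl := eq_of_color_eq_of_lt hxy hx
    exact ⟨rfl, eq_of_color_eq_of_lt hyz hx⟩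
  replace hx : B ^ 10 ≤ x := not_lt.mp hx
  have hy := le_of_color_eq hxy hx
  exact (false_of_largeColor_eq ha hb hab hn hB hB₁ hx hy hz
    (largeColor_eq_of_color_eq hxy hx hy)
    (largeColor_eq_of_color_eq hyz hy (le_of_color_eq hyz hy)) heq).elim

theorem axn_byn_eq_z_pow_succ_not_PR (a b : ℤ) (ha : a ≠ 0) (hb : b ≠ 0)
    (n : ℕ) (hn : 1 ≤ n) (hab : a + b ≠ 0)
    (h1 : (n + 1 : ℤ) * a + b ≠ 0) (h2 : a + (n + 1 : ℤ) * b ≠ 0) :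
    ∃ (r : ℕ) (χ : ℕ → Fin r),
      ∀ x y z : ℕ, 0 < x → 0 < y → 0 < z →
        χ x = χ y → χ y = χ z →
          a * (x : ℤ) ^ n + b * (y : ℤ) ^ n = (z : ℤ) ^ (n + 1) →
            x = y ∧ y = z :=
  axn_byn_eq_z_pow_succ_not_PR_general a b ha hb n hn hab
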